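/- Let D ⊆ Δ⁺ be a basic subset with diagram as defined. Then: (1) every root of D belongs to C(D); (2) for every ξ ∈ C(D) and η ∈ D with col(ξ) = col(η) and ξ ≠ η, one has row(ξ) > row(η); that is, each root of D lies in its column strictly above all other roots of C(D). -/

import Mathlib

/-- A positive root `(i,j)`: `n ≥ i > j ≥ 1`. -/
def IsPosRoot (n : ℕ) (γ : ℕ × ℕ) : Prop := 1 ≤ γ.2 ∧ γ.2 < γ.1 ∧ γ.1 ≤ n

/-- `γ` is the sum of the roots `α` and `β` (in either order):
`(i,j) + (j,k) = (i,k)`. -/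
def RootSum (α β γ : ℕ × ℕ) : Prop :=
  (α.2 = β.1 ∧ γ = (α.1, β.2)) ∨ (β.2 = α.1 ∧ γ = (β.1, α.2))

/-- A basic subset: a set of positive roots with at most one root in each
row and at most one root in each column. -/
def IsBasic (n : ℕ) (D : Set (ℕ × ℕ)) : Prop :=
  (∀ γ ∈ D, IsPosRoot n γ) ∧
  (∀ α ∈ D, ∀ β ∈ D, α.1 = β.1 → α = β) ∧
  (∀ α ∈ D, ∀ β ∈ D, α.2 = β.2 → α = β)

/-- A positive root `α` is `D`-singular if `α + β ∈ D` for some positive root `β`. -/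
def IsSingular (n : ℕ) (D : Set (ℕ × ℕ)) (α : ℕ × ℕ) : Prop :=
  IsPosRoot n α ∧ ∃ β γ, IsPosRoot n β ∧ RootSum α β γ ∧ γ ∈ D

/-- `M(D) = R(D) \ D`, where `R(D)` is the set of `D`-regular positive roots. -/
def MD (n : ℕ) (D : Set (ℕ × ℕ)) : Set (ℕ × ℕ) :=
  {γ | IsPosRoot n γ ∧ ¬ IsSingular n D γ ∧ γ ∉ D}
open scoped Classical

/-- Marks used in the diagram of a basic subset. -/
inductive Mark : Type
  | otimes : Mark
  | plus : Mark
  | minus : Mark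
  | bullet : Mark
deriving DecidableEq

/-- A marking state of the diagram: a partial assignment of marks to places. -/
abbrev MState : Type := ℕ × ℕ → Option Mark

/-- Step 0 of the diagram construction: every root of `M(D)` is marked `•`. -/
noncomputable def initMark (n : ℕ) (D : Set (ℕ × ℕ)) : MState :=
  fun γ => if γ ∈ MD n D then some Mark.bullet else none

/-- One step of the diagram construction: mark `ξ` with `⊗`, and for every
decomposition `ξ = α + β` with `col α = col ξ`, `row β = row ξ` and both
`α`, `β` unmarked, mark `α` with `+` and `β` with `−`. -/
noncomputable def markStep (s : MState) (ξ : ℕ × ℕ) : MState :=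
  fun γ =>
    if γ = ξ then some Mark.otimes
    else if γ.2 = ξ.2 ∧ ξ.2 < γ.1 ∧ γ.1 < ξ.1 ∧ s γ = none ∧ s (ξ.1, γ.1) = none then
      some Mark.plus
    else if γ.1 = ξ.1 ∧ ξ.2 < γ.2 ∧ γ.2 < ξ.1 ∧ s γ = none ∧ s (γ.2, ξ.2) = none then
      some Mark.minus
    else s γ

/-- The list of all positive roots in decreasing order with respect to `≻`
(`(k,m) ≻ (i,j)` iff `m < j`, or `m = j` and `k > i`). -/
def rootList (n : ℕ) : List (ℕ × ℕ) :=
  (List.range n).flatMap (fun j0 =>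
    (List.range n).filterMap (fun k =>
      if j0 + 1 < n - k then some (n - k, j0 + 1) else none))

/-- Run the diagram construction along a list of places, recording at each
step `i` the pair (`ξ_i`, state after step `i`). -/
noncomputable def diagRun (s : MState) : List (ℕ × ℕ) → List ((ℕ × ℕ) × MState)
  | [] => []
  | ξ :: rest =>
    if s ξ = none then (ξ, markStep s ξ) :: diagRun (markStep s ξ) rest
    else diagRun s rest

/-- The full run of the diagram construction for a basic subset `D`. -/
noncomputable def diagSeq (n : ℕ) (D : Set (ℕ × ℕ)) : List ((ℕ × ℕ) × MState) :=
  diagRun (initMark n D) (rootList n)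

/-- `c`, the number of steps (= number of `⊗` marks) of the diagram. -/
noncomputable def numSteps (n : ℕ) (D : Set (ℕ × ℕ)) : ℕ := (diagSeq n D).length

/-- `ξ_i`, the root marked `⊗` at step `i` (for `1 ≤ i ≤ c`). -/
noncomputable def xiRoot (n : ℕ) (D : Set (ℕ × ℕ)) (i : ℕ) : ℕ × ℕ :=
  (((diagSeq n D).getD (i - 1) ((0, 0), initMark n D))).1

/-- The state of the diagram after step `i` (for `0 ≤ i ≤ c`); the state
"before step `i`" is `stateAfter n D (i-1)`. -/
noncomputable def stateAfter (n : ℕ) (D : Set (ℕ × ℕ)) : ℕ → MState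
  | 0 => initMark n D
  | i + 1 => (((diagSeq n D).getD i ((0, 0), initMark n D))).2

/-- `C(D)`: the set of roots marked `⊗` on the diagram. -/
noncomputable def CD (n : ℕ) (D : Set (ℕ × ℕ)) : Set (ℕ × ℕ) :=
  {γ | γ ∈ (diagSeq n D).map Prod.fst}

/-- `A_γ`: the set of roots of `C(D)` in the same row as `γ`, strictly to the
left of `γ`. -/
noncomputable def AD (n : ℕ) (D : Set (ℕ × ℕ)) (γ : ℕ × ℕ) : Set (ℕ × ℕ) :=
  {γ' | γ' ∈ CD n D ∧ γ'.1 = γ.1 ∧ γ'.2 < γ.2}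


namespace Stmt9Aux

/-- Processing order: `γ` comes before `δ`. -/
def OrdLT (γ δ : ℕ × ℕ) : Prop := γ.2 < δ.2 ∨ (γ.2 = δ.2 ∧ δ.1 < γ.1)

lemma mem_rootList {n : ℕ} {γ : ℕ × ℕ} : γ ∈ rootList n ↔ IsPosRoot n γ := by
  obtain ⟨i, j⟩ := γ
  simp only [rootList, List.mem_flatMap, List.mem_range, List.mem_filterMap]
  constructor
  · rintro ⟨j0, hj0, k, hk, h⟩
    split_ifs at h with hc
    · rw [Option.some_inj, Prod.mk.injEq] at h
      exact ⟨show (1 : ℕ) ≤ j by omega, show j < i by omega, show i ≤ n by omega⟩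
  · rintro ⟨h1, h2, h3⟩
    have h1 : 1 ≤ j := h1
    have h2 : j < i := h2
    have h3 : i ≤ n := h3
    refine ⟨j - 1, by omega, n - i, by omega, ?_⟩
    rw [if_pos (by omega), Option.some_inj, Prod.mk.injEq]
    omega

lemma pairwise_rootList (n : ℕ) : (rootList n).Pairwise OrdLT := by
  rw [rootList, List.pairwise_flatMap]
  constructor
  · intro j0 _
    rw [List.pairwise_filterMap]
    refine (@List.pairwise_lt_range n).imp ?_
    intro a b hab x hx y hy
    split_ifs at hx hy with h1 h2
    all_goals first
      | (rw [Option.some_inj] at hx hy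
         subst hx; subst hy
         exact Or.inr ⟨rfl, show n - b < n - a by omega⟩)
      | exact absurd hx (by simp)
      | exact absurd hy (by simp)
  · refine (@List.pairwise_lt_range n).imp ?_
    intro a b hab x hx y hy
    simp only [List.mem_filterMap, List.mem_range] at hx hy
    obtain ⟨k, _, hk⟩ := hx
    obtain ⟨k', _, hk'⟩ := hy
    split_ifs at hk hk'
    all_goals first
      | (rw [Option.some_inj] at hk hk'
         subst hk; subst hk'
         exact Or.inl (show a + 1 < b + 1 by omega))
      | exact absurd hk (by simp)
      | exact absurd hk' (by simp)

/-! ### `markStep` helpers -/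

lemma markStep_self {s : MState} {ξ : ℕ × ℕ} : markStep s ξ ξ = some Mark.otimes := by
  unfold markStep; rw [if_pos rfl]

lemma markStep_mono {s : MState} {ξ γ : ℕ × ℕ} (h : s γ ≠ none) :
    markStep s ξ γ ≠ none := by
  unfold markStep
  split_ifs with h1 h2 h3 <;> simp_all

lemma markStep_stable {s : MState} {ξ γ : ℕ × ℕ} (h1 : γ ≠ ξ) (h2 : s γ ≠ none) :
    markStep s ξ γ = s γ := by
  unfold markStep
  rw [if_neg h1, if_neg (by tauto), if_neg (by tauto)]

lemma markStep_cases (s : MState) (ξ γ : ℕ × ℕ) :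
    markStep s ξ γ = s γ ∨ (γ = ξ ∧ markStep s ξ γ = some Mark.otimes) ∨
    (γ.2 = ξ.2 ∧ ξ.2 < γ.1 ∧ γ.1 < ξ.1 ∧ s γ = none ∧ s (ξ.1, γ.1) = none ∧
      markStep s ξ γ = some Mark.plus) ∨
    (γ.1 = ξ.1 ∧ ξ.2 < γ.2 ∧ γ.2 < ξ.1 ∧ s γ = none ∧ s (γ.2, ξ.2) = none ∧
      markStep s ξ γ = some Mark.minus) := by
  unfold markStep
  split_ifs with h1 h2 h3
  · exact Or.inr (Or.inl ⟨h1, rfl⟩)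
  · exact Or.inr (Or.inr (Or.inl ⟨h2.1, h2.2.1, h2.2.2.1, h2.2.2.2.1, h2.2.2.2.2, rfl⟩))
  · exact Or.inr (Or.inr (Or.inr ⟨h3.1, h3.2.1, h3.2.2.1, h3.2.2.2.1, h3.2.2.2.2, rfl⟩))
  · exact Or.inl rfl

lemma markStep_plus {s : MState} {ξ γ : ℕ × ℕ} (h1 : γ ≠ ξ)
    (hc : γ.2 = ξ.2 ∧ ξ.2 < γ.1 ∧ γ.1 < ξ.1 ∧ s γ = none ∧ s (ξ.1, γ.1) = none) :
    markStep s ξ γ = some Mark.plus := by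
  unfold markStep; rw [if_neg h1, if_pos hc]

lemma markStep_minus {s : MState} {ξ γ : ℕ × ℕ} (h1 : γ ≠ ξ) (hne : γ.2 ≠ ξ.2)
    (hc : γ.1 = ξ.1 ∧ ξ.2 < γ.2 ∧ γ.2 < ξ.1 ∧ s γ = none ∧ s (γ.2, ξ.2) = none) :
    markStep s ξ γ = some Mark.minus := by
  unfold markStep; rw [if_neg h1, if_neg (by tauto), if_pos hc]

lemma markStep_else {s : MState} {ξ γ : ℕ × ℕ} (h1 : γ ≠ ξ)
    (hp : ¬(γ.2 = ξ.2 ∧ ξ.2 < γ.1 ∧ γ.1 < ξ.1 ∧ s γ = none ∧ s (ξ.1, γ.1) = none))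
    (hm : ¬(γ.1 = ξ.1 ∧ ξ.2 < γ.2 ∧ γ.2 < ξ.1 ∧ s γ = none ∧ s (γ.2, ξ.2) = none)) :
    markStep s ξ γ = s γ := by
  unfold markStep; rw [if_neg h1, if_neg hp, if_neg hm]

/-! ### singularity helpers -/

lemma singular_of_colBelow {n : ℕ} {D : Set (ℕ × ℕ)} {i j H : ℕ}
    (hH : (H, j) ∈ D) (hpos : IsPosRoot n (i, j)) (hiH : i < H) (hHn : H ≤ n) :
    IsSingular n D (i, j) := by
  obtain ⟨h1, h2, h3⟩ := hpos
  exact ⟨⟨h1, h2, h3⟩, (H, i), (H, j),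
    ⟨by simp only []; omega, by simp only []; omega, hHn⟩,
    Or.inr ⟨rfl, rfl⟩, hH⟩

lemma singular_of_rowLeft {n : ℕ} {D : Set (ℕ × ℕ)} {i j m : ℕ}
    (hm : (i, m) ∈ D) (hpos : IsPosRoot n (i, j)) (hmj : m < j) (hm1 : 1 ≤ m) :
    IsSingular n D (i, j) := by
  obtain ⟨h1, h2, h3⟩ := hpos
  exact ⟨⟨h1, h2, h3⟩, (j, m), (i, m),
    ⟨hm1, by simp only []; omega, by simp only []; omega⟩,
    Or.inl ⟨rfl, rfl⟩, hm⟩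

/-! ### the invariant -/

structure Inv (n : ℕ) (D : Set (ℕ × ℕ)) (s : MState) (rest : List (ℕ × ℕ)) : Prop where
  pos : ∀ γ ∈ rest, IsPosRoot n γ
  pw : rest.Pairwise OrdLT
  B : ∀ γ : ℕ × ℕ, IsPosRoot n γ → γ ∉ rest → s γ ≠ none
  bulF : ∀ γ ∈ MD n D, s γ = some Mark.bullet
  bulB : ∀ γ : ℕ × ℕ, s γ = some Mark.bullet → γ ∈ MD n D
  dm1 : ∀ η ∈ D, s η = none ∨ s η = some Mark.otimes
  dm2 : ∀ η ∈ D, (s η = some Mark.otimes ↔ η ∉ rest)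
  E : ∀ h j t : ℕ, (h, j) ∈ D → j < t → t < h → s (h, t) ≠ none → s (t, j) ≠ none
  F : ∀ h j t : ℕ, (h, j) ∈ D → j < t → t < h → (h, j) ∉ rest → s (t, j) ≠ none
  J1 : ∀ m j h K : ℕ, (K, m) ∈ D → (h, j) ∈ D → m < j → j < h → h < K →
    (K, m) ∉ rest → s (K, h) = some Mark.minus
  J2 : ∀ m j h K : ℕ, (K, m) ∈ D → (h, j) ∈ D → m < j → j < h → h < K →
    s (K, h) = none ∨ s (K, h) = some Mark.minus
  L : ∀ m j h K : ℕ, (K, m) ∈ D → (h, j) ∈ D → m < j → j < h → h < K →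
    (K, m) ∈ rest → s (h, m) = none

section Fire

variable {n : ℕ} {D : Set (ℕ × ℕ)} {s : MState} {ξ : ℕ × ℕ} {rest' : List (ℕ × ℕ)}

lemma fire_notmem (hI : Inv n D s (ξ :: rest')) :
    ∀ δ : ℕ × ℕ, OrdLT δ ξ → δ ∉ ξ :: rest' := by
  intro δ hlt hmem
  rcases List.mem_cons.mp hmem with h | h
  · subst h; rcases hlt with h | h
    · omega
    · omega
  · have := (List.pairwise_cons.mp hI.pw).1 δ h
    unfold OrdLT at this hlt; omega

lemma fire_B (hI : Inv n D s (ξ :: rest')) :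
    ∀ δ : ℕ × ℕ, IsPosRoot n δ → OrdLT δ ξ → s δ ≠ none := fun δ h1 h2 =>
  hI.B δ h1 (fire_notmem hI δ h2)

lemma fire_class (hD : IsBasic n D) (hI : Inv n D s (ξ :: rest'))
    (hs : s ξ = none) :
    ξ ∈ D ∨ (∃ m, 1 ≤ m ∧ m < ξ.2 ∧ (ξ.1, m) ∈ D) ∨
      (∃ H, ξ.1 < H ∧ H ≤ n ∧ (H, ξ.2) ∈ D) := by
  have hposξ : IsPosRoot n ξ := hI.pos ξ (List.mem_cons_self)
  by_cases hξD : ξ ∈ D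
  · exact Or.inl hξD
  have hnMD : ξ ∉ MD n D := fun h => by
    have := hI.bulF ξ h; rw [hs] at this; exact absurd this (by simp)
  have hsing : IsSingular n D ξ := by
    by_contra hns
    exact hnMD ⟨hposξ, hns, hξD⟩
  obtain ⟨-, β, γ', hβ, hsum, hγ'D⟩ := hsing
  obtain ⟨hβ1, hβ2, hβ3⟩ := hβ
  rcases hsum with ⟨h1, h2⟩ | ⟨h1, h2⟩
  · refine Or.inr (Or.inl ⟨β.2, hβ1, by omega, ?_⟩)
    rw [h2] at hγ'D; exact hγ'D
  · refine Or.inr (Or.inr ⟨β.1, by omega, hβ3, ?_⟩)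
    rw [h2] at hγ'D; exact hγ'D

lemma fire_noLeft (hD : IsBasic n D) (hI : Inv n D s (ξ :: rest'))
    (hs : s ξ = none) {h j c : ℕ} (hη : (h, j) ∈ D) (hcj : c < j)
    (hξ : ξ = (h, c)) : False := by
  have hpη := hD.1 _ hη
  obtain ⟨hj1, hjh, hhn⟩ := hpη
  rcases fire_class hD hI hs with hc | ⟨m, hm1, hmc, hmD⟩ | ⟨H, hH1, hH2, hHD⟩
  · rw [hξ] at hc
    have := hD.2.1 _ hc _ hη rfl
    rw [Prod.mk.injEq] at this; omega
  · rw [hξ] at hmD hmc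
    have := hD.2.1 _ hmD _ hη rfl
    rw [Prod.mk.injEq] at this
    simp only [] at hmc
    omega
  · rw [hξ] at hHD hH1
    have hH1' : h < H := hH1
    have hmem : (H, c) ∉ ξ :: rest' :=
      fire_notmem hI (H, c) (by rw [hξ]; exact Or.inr ⟨rfl, hH1'⟩)
    have := hI.F H c h hHD (by omega) hH1' hmem
    rw [← hξ] at this
    exact this hs

lemma fire_prot (hD : IsBasic n D) (hI : Inv n D s (ξ :: rest'))
    (hs : s ξ = none) {h j : ℕ} (hη : (h, j) ∈ D) (hcol : ξ.2 = j)
    (hne : ξ.1 ≠ h) : h < ξ.1 ∧ s (ξ.1, h) = some Mark.minus := by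
  have hposξ : IsPosRoot n ξ := hI.pos ξ (List.mem_cons_self)
  obtain ⟨hp1, hp2, hp3⟩ := hposξ
  have hpη := hD.1 _ hη
  obtain ⟨hj1, hjh, hhn⟩ := hpη
  have hlt : h < ξ.1 := by
    rcases Nat.lt_or_ge h ξ.1 with h' | h'
    · exact h'
    have hxh : ξ.1 < h := by omega
    have hmem : (h, j) ∉ ξ :: rest' :=
      fire_notmem hI (h, j) (Or.inr ⟨hcol.symm, hxh⟩)
    have := hI.F h j ξ.1 hη (by omega) hxh hmem
    rw [show ((ξ.1 : ℕ), j) = ξ by rw [← hcol]] at this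
    exact absurd hs this
  refine ⟨hlt, ?_⟩
  rcases fire_class hD hI hs with hc | ⟨m, hm1, hmc, hmD⟩ | ⟨H, hH1, hH2, hHD⟩
  · have := hD.2.2 _ hc _ hη (by rw [hcol])
    rw [Prod.ext_iff] at this
    exact absurd this.1 hne
  · have hmem : (ξ.1, m) ∉ ξ :: rest' :=
      fire_notmem hI (ξ.1, m) (Or.inl (show m < ξ.2 from hmc))
    exact hI.J1 m j h ξ.1 hmD hη (by omega) hjh hlt hmem
  · have := hD.2.2 _ hHD _ hη (by rw [hcol])
    rw [Prod.mk.injEq] at this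
    omega

lemma fire_inv (hD : IsBasic n D) (hI : Inv n D s (ξ :: rest'))
    (hs : s ξ = none) : Inv n D (markStep s ξ) rest' := by
  have hposξ : IsPosRoot n ξ := hI.pos ξ (List.mem_cons_self)
  obtain ⟨hp1, hp2, hp3⟩ := hposξ
  have hξnotin : ξ ∉ rest' := fun hmem => by
    have := (List.pairwise_cons.mp hI.pw).1 ξ hmem
    unfold OrdLT at this; omega
  refine ⟨?_, ?_, ?_, ?_, ?_, ?_, ?_, ?_, ?_, ?_, ?_, ?_⟩
  · exact fun γ hγ => hI.pos γ (List.mem_cons_of_mem _ hγ)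
  · exact (List.pairwise_cons.mp hI.pw).2
  · -- B
    intro γ hγpos hγmem
    by_cases hγξ : γ = ξ
    · subst hγξ; rw [markStep_self]; simp
    · exact markStep_mono (hI.B γ hγpos (by simp [hγξ, hγmem]))
  · -- bulF
    intro γ hγ
    have h1 := hI.bulF γ hγ
    have hγξ : γ ≠ ξ := fun h => by rw [h, hs] at h1; exact absurd h1 (by simp)
    rw [markStep_stable hγξ (by rw [h1]; simp)]; exact h1
  · -- bulB
    intro γ hγ
    rcases markStep_cases s ξ γ with h | ⟨_, h⟩ | ⟨_, _, _, _, _, h⟩ | ⟨_, _, _, _, _, h⟩ <;>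
      rw [h] at hγ
    · exact hI.bulB γ hγ
    · exact absurd hγ (by simp)
    · exact absurd hγ (by simp)
    · exact absurd hγ (by simp)
  · -- dm1
    intro η hη
    by_cases hηξ : η = ξ
    · subst hηξ; rw [markStep_self]; exact Or.inr rfl
    obtain ⟨h, j⟩ := η
    rcases markStep_cases s ξ (h, j) with hcase | ⟨heq, _⟩ |
        ⟨hc1, hc2, hc3, hc4, hc5, _⟩ | ⟨hc1, hc2, hc3, hc4, hc5, _⟩
    · rw [hcase]; exact hI.dm1 _ hη
    · exact absurd heq hηξ
    · -- plus branch on a D-root: impossible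
      exfalso
      have hc1' : j = ξ.2 := hc1
      have hc3' : h < ξ.1 := hc3
      have hpr := fire_prot hD hI hs hη hc1'.symm (by omega)
      have hc5' : s (ξ.1, h) = none := hc5
      rw [hpr.2] at hc5'; exact absurd hc5' (by simp)
    · -- minus branch on a D-root: impossible
      exfalso
      have hc1' : h = ξ.1 := hc1
      have hc2' : ξ.2 < j := hc2
      exact fire_noLeft hD hI hs hη hc2'
        (by rw [Prod.ext_iff]; exact ⟨hc1'.symm, rfl⟩)
  · -- dm2
    intro η hη
    constructor
    · intro hmark
      by_cases hηξ : η = ξ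
      · subst hηξ; exact hξnotin
      · have hsη : s η = some Mark.otimes := by
          rcases markStep_cases s ξ η with h | ⟨heq, _⟩ |
              ⟨_, _, _, _, _, h⟩ | ⟨_, _, _, _, _, h⟩
          · rw [← h]; exact hmark
          · exact absurd heq hηξ
          · rw [h] at hmark; exact absurd hmark (by simp)
          · rw [h] at hmark; exact absurd hmark (by simp)
        intro hmem
        exact absurd ((hI.dm2 η hη).mp hsη) (by simp [hmem])
    · intro hmem
      by_cases hηξ : η = ξ
      · subst hηξ; exact markStep_self
      · have : η ∉ ξ :: rest' := by simp [hηξ, hmem]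
        have h2 := (hI.dm2 η hη).mpr this
        rw [markStep_stable hηξ (by rw [h2]; simp)]; exact h2
  · -- E
    intro h j t hη hjt hth hne
    have hpη := hD.1 _ hη
    obtain ⟨hj1, hjh, hhn⟩ := hpη
    have hpostj : IsPosRoot n (t, j) := ⟨hj1, hjt, show t ≤ n by omega⟩
    by_cases hold : s (h, t) = none
    · -- newly marked this step
      rcases markStep_cases s ξ (h, t) with hcase | ⟨heq, _⟩ |
          ⟨hc1, hc2, hc3, hc4, hc5, _⟩ | ⟨hc1, hc2, hc3, hc4, hc5, _⟩
      · rw [hcase] at hne; exact absurd hold hne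
      · -- (h,t) = ξ fired
        have hord : OrdLT (t, j) ξ := by
          rw [← heq]; exact Or.inl hjt
        exact markStep_mono (fire_B hI (t, j) hpostj hord)
      · -- plus at (h,t): ξ = (ξ.1, t), ξ.1 > h; column t > j already done
        have hc1' : t = ξ.2 := hc1
        have hord : OrdLT (t, j) ξ := Or.inl (show j < ξ.2 by omega)
        exact markStep_mono (fire_B hI (t, j) hpostj hord)
      · -- minus at (h,t): ξ = (h, ξ.2), ξ.2 < t
        have hc1' : h = ξ.1 := hc1
        have hc2' : ξ.2 < t := hc2
        have hc3' : t < ξ.1 := hc3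
        have hc5' : s (t, ξ.2) = none := hc5
        rcases Nat.lt_trichotomy ξ.2 j with hcmp | hcmp | hcmp
        · exact absurd (fire_noLeft hD hI hs hη hcmp
            (by rw [Prod.ext_iff]; exact ⟨hc1'.symm, rfl⟩)) not_false
        · -- ξ = (h, j) = the D-root itself; (t,j) gets plus
          have hξeq : ξ = (h, j) := by rw [Prod.ext_iff]; exact ⟨hc1'.symm, hcmp⟩
          have hres : markStep s ξ (t, j) = some Mark.plus := by
            refine markStep_plus ?_ ?_
            · rw [hξeq]; intro hcon; rw [Prod.mk.injEq] at hcon; omega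
            · refine ⟨hcmp.symm, hc2', hc3', ?_, ?_⟩
              · rw [← hcmp]; exact hc5'
              · show s (ξ.1, t) = none
                rw [← hc1']; exact hc4
          rw [hres]; simp
        · exact markStep_mono (fire_B hI (t, j) hpostj (Or.inl hcmp))
    · exact markStep_mono (hI.E h j t hη hjt hth hold)
  · -- F
    intro h j t hη hjt hth hmem
    have hpη := hD.1 _ hη
    obtain ⟨hj1, hjh, hhn⟩ := hpη
    by_cases hηξ : ((h : ℕ), j) = ξ
    · by_cases htj : s (t, j) = none
      · have hht : s (h, t) = none := by
          by_contra hcon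
          exact absurd htj (fun h' => (hI.E h j t hη hjt hth hcon) h')
        have hres : markStep s ξ (t, j) = some Mark.plus := by
          rw [← hηξ]
          refine markStep_plus ?_ ?_
          · intro hcon; rw [Prod.mk.injEq] at hcon; omega
          · exact ⟨rfl, hjt, hth, htj, hht⟩
        rw [hres]; simp
      · exact markStep_mono htj
    · exact markStep_mono (hI.F h j t hη hjt hth (by simp [hηξ, hmem]))
  · -- J1
    intro m j h K hKm hhj hmj hjh hhK hmem
    have hpKm := hD.1 _ hKm
    obtain ⟨hm1, hmK, hKn⟩ := hpKm
    by_cases hKmξ : ((K : ℕ), m) = ξ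
    · have hL := hI.L m j h K hKm hhj hmj hjh hhK
        (by rw [hKmξ]; exact List.mem_cons_self)
      have hne1 : ((K : ℕ), h) ≠ ξ := by
        rw [← hKmξ]; intro hcon; rw [Prod.mk.injEq] at hcon; omega
      rcases hI.J2 m j h K hKm hhj hmj hjh hhK with hKh | hKh
      · rw [← hKmξ]
        refine markStep_minus ?_ ?_ ?_
        · intro hcon; rw [Prod.mk.injEq] at hcon; omega
        · show h ≠ m; omega
        · exact ⟨rfl, show m < h by omega, show h < K by omega, hKh, hL⟩
      · rw [markStep_stable hne1 (by rw [hKh]; simp)]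
        exact hKh
    · have hJ := hI.J1 m j h K hKm hhj hmj hjh hhK (by simp [hKmξ, hmem])
      have hne1 : ((K : ℕ), h) ≠ ξ := by
        intro hcon
        rw [hcon] at hJ; rw [hJ] at hs; exact absurd hs (by simp)
      rw [markStep_stable hne1 (by rw [hJ]; simp)]
      exact hJ
  · -- J2
    intro m j h K hKm hhj hmj hjh hhK
    have hpKm := hD.1 _ hKm
    obtain ⟨hm1, hmK, hKn⟩ := hpKm
    rcases hI.J2 m j h K hKm hhj hmj hjh hhK with hKh | hKh
    · rcases markStep_cases s ξ (K, h) with hcase | ⟨heq, _⟩ |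
          ⟨hc1, hc2, hc3, hc4, hc5, hres⟩ | ⟨hc1, hc2, hc3, hc4, hc5, hres⟩
      · rw [hcase]; exact Or.inl hKh
      · -- fire at (K,h): impossible since (K,m) is done → J1 minus
        exfalso
        have hmemKm : (K, m) ∉ ξ :: rest' := fire_notmem hI (K, m)
          (by rw [← heq]; exact Or.inl (show m < h by omega))
        have := hI.J1 m j h K hKm hhj hmj hjh hhK hmemKm
        rw [this] at hKh; exact absurd hKh (by simp)
      · -- plus at (K,h): column h active → (K,m) done → J1 minus contra
        exfalso
        have hc1' : h = ξ.2 := hc1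
        have hmemKm : (K, m) ∉ ξ :: rest' := fire_notmem hI (K, m)
          (Or.inl (show m < ξ.2 by omega))
        have := hI.J1 m j h K hKm hhj hmj hjh hhK hmemKm
        rw [this] at hKh; exact absurd hKh (by simp)
      · rw [hres]; exact Or.inr rfl
    · have hne1 : ((K : ℕ), h) ≠ ξ := by
        intro hcon; rw [hcon] at hKh; rw [hKh] at hs; exact absurd hs (by simp)
      rw [markStep_stable hne1 (by rw [hKh]; simp)]
      exact Or.inr hKh
  · -- L
    intro m j h K hKm hhj hmj hjh hhK hmem
    have hpKm := hD.1 _ hKm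
    obtain ⟨hm1, hmK, hKn⟩ := hpKm
    have hpη := hD.1 _ hhj
    obtain ⟨hj1, hjh', hhn⟩ := hpη
    have hold : s (h, m) = none :=
      hI.L m j h K hKm hhj hmj hjh hhK (List.mem_cons_of_mem _ hmem)
    rcases markStep_cases s ξ (h, m) with hcase | ⟨heq, _⟩ |
        ⟨hc1, hc2, hc3, hc4, hc5, hres⟩ | ⟨hc1, hc2, hc3, hc4, hc5, hres⟩
    · rw [hcase]; exact hold
    · -- fire at (h,m): but (K,m) is strictly earlier in same column, so done — contra
      exfalso
      have : (K, m) ∉ ξ :: rest' := fire_notmem hI (K, m)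
        (by rw [← heq]; exact Or.inr ⟨rfl, hhK⟩)
      exact this (List.mem_cons_of_mem _ hmem)
    · -- plus at (h,m) from ξ = (W, m), W = ξ.1 > h
      exfalso
      have hc1' : m = ξ.2 := hc1
      have hc2' : ξ.2 < h := hc2
      have hc3' : h < ξ.1 := hc3
      have hc5' : s (ξ.1, h) = none := hc5
      -- compare W := ξ.1 with K
      rcases Nat.lt_trichotomy ξ.1 K with hWK | hWK | hWK
      · have : (K, m) ∉ ξ :: rest' := fire_notmem hI (K, m)
          (Or.inr ⟨show m = ξ.2 from hc1', hWK⟩)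
        exact this (List.mem_cons_of_mem _ hmem)
      · have hξeq : ξ = (K, m) := by rw [Prod.ext_iff]; exact ⟨hWK, hc1'.symm⟩
        rw [hξeq] at hξnotin
        exact hξnotin hmem
      · -- W > K : classify fire at (W, m)
        rcases fire_class hD hI hs with hc | ⟨μ, hμ1, hμ2, hμD⟩ | ⟨H, hH1, hH2, hHD⟩
        · have heq := hD.2.2 _ hc _ hKm hc1'.symm
          have : ξ.1 = K := by rw [heq]
          omega
        · -- row-singular: (W, μ) ∈ D, μ < m; use J1 for ((W,μ),(h,j))
          have hmemWμ : (ξ.1, μ) ∉ ξ :: rest' := fire_notmem hI (ξ.1, μ)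
            (Or.inl (show μ < ξ.2 from hμ2))
          have hW : ξ.1 ≤ n := by
            have := hD.1 _ hμD; exact this.2.2
          have hJ := hI.J1 μ j h ξ.1 hμD hhj (by omega) hjh
            (by omega) hmemWμ
          rw [hJ] at hc5'; exact absurd hc5' (by simp)
        · have heq := hD.2.2 _ hHD _ hKm hc1'.symm
          have h2 : H = K := by
            have := congrArg Prod.fst heq; exact this
          have hH1' : ξ.1 < H := hH1
          omega
    · -- minus at (h,m) from ξ = (h, c), c < m < j : impossible (left of row D-root)
      exfalso
      have hc1' : h = ξ.1 := hc1
      have hc2' : ξ.2 < m := hc2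
      exact fire_noLeft hD hI hs hhj (show ξ.2 < j by omega)
        (by rw [Prod.ext_iff]; exact ⟨hc1'.symm, rfl⟩)

end Fire

lemma skip_inv {n : ℕ} {D : Set (ℕ × ℕ)} {s : MState} {ξ : ℕ × ℕ}
    {rest' : List (ℕ × ℕ)} (hI : Inv n D s (ξ :: rest')) (hs : s ξ ≠ none) :
    Inv n D s rest' := by
  refine ⟨fun γ hγ => hI.pos γ (List.mem_cons_of_mem _ hγ),
    (List.pairwise_cons.mp hI.pw).2, ?_, hI.bulF, hI.bulB, hI.dm1, ?_, hI.E, ?_, ?_,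
    hI.J2, fun m j h K h1 h2 h3 h4 h5 h6 =>
      hI.L m j h K h1 h2 h3 h4 h5 (List.mem_cons_of_mem _ h6)⟩
  · intro γ hγpos hγmem
    by_cases hγξ : γ = ξ
    · subst hγξ; exact hs
    · exact hI.B γ hγpos (by simp [hγξ, hγmem])
  · intro η hη
    constructor
    · intro hmark hmem
      exact ((hI.dm2 η hη).mp hmark) (List.mem_cons_of_mem _ hmem)
    · intro hmem
      by_cases hηξ : η = ξ
      · subst hηξ
        rcases hI.dm1 η hη with h | h
        · exact absurd h hs
        · exact h
      · exact (hI.dm2 η hη).mpr (by simp [hηξ, hmem])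
  · intro h j t hη hjt hth hmem
    by_cases hηξ : ((h : ℕ), j) = ξ
    · -- ξ = (h,j) ∈ D was skipped: it must already be ⊗, hence not in ξ :: rest' — contra
      exfalso
      rcases hI.dm1 _ hη with h' | h'
      · rw [hηξ] at h'; exact hs h'
      · have := (hI.dm2 _ hη).mp h'
        exact this (by rw [hηξ]; exact List.mem_cons_self)
    · exact hI.F h j t hη hjt hth (by simp [hηξ, hmem])
  · intro m j h K hKm hhj hmj hjh hhK hmem
    by_cases hKmξ : ((K : ℕ), m) = ξ
    · exfalso
      rcases hI.dm1 _ hKm with h' | h'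
      · rw [hKmξ] at h'; exact hs h'
      · have := (hI.dm2 _ hKm).mp h'
        exact this (by rw [hKmξ]; exact List.mem_cons_self)
    · exact hI.J1 m j h K hKm hhj hmj hjh hhK (by simp [hKmξ, hmem])

lemma master {n : ℕ} {D : Set (ℕ × ℕ)} (hD : IsBasic n D) :
    ∀ (rest : List (ℕ × ℕ)) (s : MState), Inv n D s rest →
      (∀ η ∈ D, η ∈ rest → η ∈ (diagRun s rest).map Prod.fst) ∧
      (∀ ξ ∈ (diagRun s rest).map Prod.fst, ∀ h j : ℕ, (h, j) ∈ D → ξ.2 = j →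
        ξ ≠ (h, j) → h < ξ.1) := by
  intro rest
  induction rest with
  | nil =>
    intro s _
    constructor
    · intro η _ hmem; exact absurd hmem List.not_mem_nil
    · intro ξ hξ; rw [diagRun] at hξ; exact absurd hξ (by simp)
  | cons ξ rest' IH =>
    intro s hI
    by_cases hs : s ξ = none
    · have hrun : diagRun s (ξ :: rest') = (ξ, markStep s ξ) :: diagRun (markStep s ξ) rest' := by
        rw [diagRun, if_pos hs]
      have hI' := fire_inv hD hI hs
      obtain ⟨IH1, IH2⟩ := IH (markStep s ξ) hI'
      constructor
      · intro η hη hmem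
        rw [hrun]
        rcases List.mem_cons.mp hmem with h | h
        · subst h; simp
        · simp only [List.map_cons]
          exact List.mem_cons_of_mem _ (IH1 η hη h)
      · intro ξ' hξ' h j hη hcol hne
        rw [hrun] at hξ'
        simp only [List.map_cons] at hξ'
        rcases List.mem_cons.mp hξ' with h' | h'
        · subst h'
          have : ξ'.1 ≠ h := by
            intro hcon
            apply hne
            rw [Prod.ext_iff]; exact ⟨hcon, hcol⟩
          exact (fire_prot hD hI hs hη hcol this).1
        · exact IH2 ξ' h' h j hη hcol hne
    · have hrun : diagRun s (ξ :: rest') = diagRun s rest' := by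
        rw [diagRun, if_neg hs]
      have hI' := skip_inv hI hs
      obtain ⟨IH1, IH2⟩ := IH s hI'
      rw [hrun]
      refine ⟨?_, IH2⟩
      intro η hη hmem
      rcases List.mem_cons.mp hmem with h | h
      · subst h
        exfalso
        rcases hI.dm1 η hη with h' | h'
        · exact hs h'
        · exact ((hI.dm2 η hη).mp h') (List.mem_cons_self)
      · exact IH1 η hη h

lemma init_inv {n : ℕ} {D : Set (ℕ × ℕ)} (hD : IsBasic n D) :
    Inv n D (initMark n D) (rootList n) := by
  have hnone : ∀ γ : ℕ × ℕ, γ ∉ MD n D → initMark n D γ = none := by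
    intro γ h; unfold initMark; rw [if_neg h]
  have hsome : ∀ γ ∈ MD n D, initMark n D γ = some Mark.bullet := by
    intro γ h; unfold initMark; rw [if_pos h]
  refine ⟨fun γ hγ => mem_rootList.mp hγ, pairwise_rootList n, ?_, hsome, ?_, ?_, ?_,
    ?_, ?_, ?_, ?_, ?_⟩
  · intro γ hγpos hγmem
    exact absurd (mem_rootList.mpr hγpos) hγmem
  · intro γ hγ
    unfold initMark at hγ
    split_ifs at hγ with h
    exact h
  · intro η hη
    refine Or.inl (hnone η fun h => h.2.2 hη)
  · intro η hη
    constructor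
    · intro hmark
      have := hnone η fun h => h.2.2 hη
      rw [this] at hmark; exact absurd hmark (by simp)
    · intro hmem
      exact absurd (mem_rootList.mpr (hD.1 η hη)) hmem
  · intro h j t hη hjt hth hne
    exfalso
    have hpη := hD.1 _ hη
    obtain ⟨hj1, hjh, hhn⟩ := hpη
    refine hne (hnone (h, t) fun hmd => ?_)
    exact hmd.2.1 (singular_of_rowLeft hη ⟨by simp only []; omega,
      by simp only []; omega, hhn⟩ hjt hj1)
  · intro h j t hη hjt hth hmem
    exact absurd (mem_rootList.mpr (hD.1 _ hη)) hmem
  · intro m j h K hKm hhj hmj hjh hhK hmem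
    exact absurd (mem_rootList.mpr (hD.1 _ hKm)) hmem
  · intro m j h K hKm hhj hmj hjh hhK
    have hpKm := hD.1 _ hKm
    obtain ⟨hm1, hmK, hKn⟩ := hpKm
    have hpη := hD.1 _ hhj
    obtain ⟨hj1, hjh', hhn⟩ := hpη
    refine Or.inl (hnone (K, h) fun hmd => ?_)
    exact hmd.2.1 ⟨⟨by simp only []; omega, by simp only []; omega, hKn⟩,
      (h, m), (K, m), ⟨by simp only []; omega, by simp only []; omega,
        by simp only []; omega⟩, Or.inl ⟨rfl, rfl⟩, hKm⟩
  · intro m j h K hKm hhj hmj hjh hhK hmem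
    have hpKm := hD.1 _ hKm
    obtain ⟨hm1, hmK, hKn⟩ := hpKm
    have hpη := hD.1 _ hhj
    obtain ⟨hj1, hjh', hhn⟩ := hpη
    refine hnone (h, m) fun hmd => ?_
    exact hmd.2.1 ⟨⟨by simp only []; omega, by simp only []; omega, hhn⟩,
      (K, h), (K, m), ⟨by simp only []; omega, by simp only []; omega, hKn⟩,
      Or.inr ⟨rfl, rfl⟩, hKm⟩

end Stmt9Aux

/-- (1) every root of `D` belongs to `C(D)`; (2) each root of `D`
lies in its column strictly above all other roots of `C(D)`. -/
theorem stmt9 (n : ℕ) (hn : 2 ≤ n) (D : Set (ℕ × ℕ)) (hD : IsBasic n D) :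
    (∀ η ∈ D, η ∈ CD n D) ∧
    (∀ ξ ∈ CD n D, ∀ η ∈ D, ξ.2 = η.2 → ξ ≠ η → η.1 < ξ.1) := by
  obtain ⟨M1, M2⟩ := Stmt9Aux.master hD (rootList n) (initMark n D) (Stmt9Aux.init_inv hD)
  constructor
  · intro η hη
    have hmem : η ∈ rootList n := Stmt9Aux.mem_rootList.mpr (hD.1 η hη)
    have := M1 η hη hmem
    simpa [CD, diagSeq] using this
  · intro ξ hξ η hη hcol hne
    have hξ' : ξ ∈ (diagRun (initMark n D) (rootList n)).map Prod.fst := by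
      simpa [CD, diagSeq] using hξ
    have := M2 ξ hξ' η.1 η.2 (by simpa using hη) hcol
      (by simpa using hne)
    exact this
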